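/- A sequence (X_n) in E is L¹-uniformly integrable if and only if (i) (X_n) is bounded in every seminorm p_φ (i.e., sup_n p_φ(X_n) < ∞ for each φ), and (ii) for every φ and every ε > 0 there exists δ > 0 such that for every band projection P with p_φ(P e) ≤ δ one has p_φ(P|X_n|) < ε for all n. -/

import Mathlib

variable {E : Type*} [AddCommGroup E] [Lattice E]
  [CovariantClass E E (· + ·) (· ≤ ·)] [Module ℝ E]

/-- `E` is Dedekind complete. -/
def DedekindComplete (E : Type*) [AddCommGroup E] [Lattice E] : Prop :=
  ∀ A : Set E, A.Nonempty → BddAbove A → ∃ s, IsLUB A s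

/-- `e` is a weak order unit. -/
def IsWeakUnit (e : E) : Prop :=
  0 < e ∧ ∀ x : E, 0 ≤ x → IsLUB (Set.range fun n : ℕ => x ⊓ n • e) x

/-- A band (order) projection. -/
def IsBandProj (P : E →ₗ[ℝ] E) : Prop :=
  (∀ x, P (P x) = P x) ∧ ∀ x : E, 0 ≤ x → 0 ≤ P x ∧ P x ≤ x

/-- `P` is the band projection onto the band generated by `u ≥ 0`. -/
def IsProjOnBandGen (P : E →ₗ[ℝ] E) (u : E) : Prop :=
  IsBandProj P ∧ ∀ x : E, 0 ≤ x → IsLUB (Set.range fun n : ℕ => x ⊓ n • u) (P x)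

/-- A conditional expectation with respect to the weak order unit `e`. -/
def IsCondExp (e : E) (F : E →ₗ[ℝ] E) : Prop :=
  (∀ x, F (F x) = F x) ∧ (∀ x : E, 0 < x → 0 < F x) ∧ F e = e ∧
  ∀ V : ℕ → E, Antitone V → IsGLB (Set.range V) 0 →
    IsGLB (Set.range fun n => F (V n)) 0

/-- A positive, normalized, (sequentially) order continuous functional. -/
def IsNormedFunctional (e : E) (φ : E →ₗ[ℝ] ℝ) : Prop :=
  (∀ x : E, 0 ≤ x → 0 ≤ φ x) ∧ φ e = 1 ∧
  ∀ V : ℕ → E, Antitone V → IsGLB (Set.range V) 0 →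
    Filter.Tendsto (fun n => φ (V n)) Filter.atTop (nhds 0)

/-- `Φ` is a separating family of normalized positive order continuous functionals. -/
def IsSeparatingFamily (e : E) (Φ : Set (E →ₗ[ℝ] ℝ)) : Prop :=
  (∀ φ ∈ Φ, IsNormedFunctional e φ) ∧ ∀ x : E, (∀ φ ∈ Φ, φ x = 0) → x = 0

/-- The sequence `X` is `L¹`-uniformly integrable with respect to the family of band
projections `P n l` (the projection onto the band generated by `(|X n| - l • e)⁺`). -/
def UnifInt (F : E →ₗ[ℝ] E) (Φ : Set (E →ₗ[ℝ] ℝ)) (X : ℕ → E)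
    (P : ℕ → ℝ → (E →ₗ[ℝ] E)) : Prop :=
  ∀ φ ∈ Φ, ∀ ε : ℝ, 0 < ε → ∃ l₀ : ℝ, ∀ l : ℝ, l₀ ≤ l → ∀ n : ℕ,
    φ (F (P n l |X n|)) < ε

/-!
Let `P` be the band projection onto the band generated by `(x - l • e)⁺`. Since `P` fixes
`(x - l • e)⁺` and kills the disjoint part `(x - l • e)⁻`, we get `P x - l • P e = (x - l • e)⁺`.
This gives both a Chebyshev inequality `l • P e ≤ P x` and the bound `x - P x ≤ l • (e - P e)`.
For any band projection `Q` the second one yields `p(Q x) ≤ p(P x) + l p(Q e)`, so small tails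
give boundedness (take `Q = id`) and uniform absolute continuity. Conversely, by Chebyshev,
boundedness makes `p(P e) ≤ M / l` small, and absolute continuity then makes the tails small.
-/

-- Mathlib's `monotone_iff_map_nonneg` needs `IsOrderedAddMonoid`, which is not inferred here.
theorem monotone_of_map_nonneg {α β F : Type*} [AddCommGroup α] [PartialOrder α]
    [AddLeftMono α] [AddCommGroup β] [PartialOrder β] [AddLeftMono β] [FunLike F α β]
    [AddMonoidHomClass F α β] (f : F) (hf : ∀ x, 0 ≤ x → 0 ≤ f x) : Monotone f := by
  intro a b hab
  simpa using add_le_add_left (hf (b - a) (sub_nonneg.2 hab)) (f a)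

section LatticeOrderedGroup

variable {α : Type*} [AddCommGroup α] [Lattice α] [AddLeftMono α]

theorem inf_add_le_inf_add_inf {a b c : α} (ha : 0 ≤ a) (hb : 0 ≤ b) (hc : 0 ≤ c) :
    a ⊓ (b + c) ≤ a ⊓ b + a ⊓ c := by
  rw [inf_add, add_inf, add_inf]
  refine le_inf (le_inf ?_ ?_) (le_inf ?_ inf_le_right)
  · exact inf_le_left.trans (le_add_of_nonneg_right ha)
  · exact inf_le_left.trans (le_add_of_nonneg_right hc)
  · exact inf_le_left.trans (le_add_of_nonneg_left hb)

theorem inf_nsmul_eq_zero_of_inf_eq_zero {a b : α} (ha : 0 ≤ a) (hb : 0 ≤ b)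
    (hab : a ⊓ b = 0) (k : ℕ) : a ⊓ k • b = 0 := by
  induction k with
  | zero => simpa using ha
  | succ k ih =>
    refine le_antisymm ?_ (le_inf ha (nsmul_nonneg hb _))
    calc a ⊓ (k + 1) • b ≤ a ⊓ k • b + a ⊓ b :=
          succ_nsmul b k ▸ inf_add_le_inf_add_inf ha (nsmul_nonneg hb k) hb
      _ = 0 := by rw [ih, hab, add_zero]

end LatticeOrderedGroup

theorem IsBandProj.monotone {Q : E →ₗ[ℝ] E} (hQ : IsBandProj Q) : Monotone Q :=
  monotone_of_map_nonneg Q fun x hx => (hQ.2 x hx).1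

theorem IsCondExp.monotone {e : E} {F : E →ₗ[ℝ] E} (hF : IsCondExp e F) : Monotone F := by
  refine monotone_of_map_nonneg F fun x hx => ?_
  rcases hx.lt_or_eq with hx | rfl
  · exact (hF.2.1 x hx).le
  · rw [map_zero]

theorem IsNormedFunctional.monotone {e : E} {φ : E →ₗ[ℝ] ℝ} (hφ : IsNormedFunctional e φ) :
    Monotone φ :=
  monotone_of_map_nonneg φ hφ.1

namespace IsProjOnBandGen

theorem apply_generator {M : Type*} [AddCommGroup M] [Lattice M] [Module ℝ M]
    {P : M →ₗ[ℝ] M} {u : M} (hP : IsProjOnBandGen P u) (hu : 0 ≤ u) : P u = u := by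
  refine (hP.2 u hu).unique ⟨?_, fun b hb => ?_⟩
  · rintro _ ⟨k, rfl⟩
    exact inf_le_left
  · simpa using hb (Set.mem_range_self 1)

variable {P : E →ₗ[ℝ] E}

theorem apply_eq_zero_of_inf_eq_zero {u v : E} (hP : IsProjOnBandGen P u) (hu : 0 ≤ u)
    (hv : 0 ≤ v) (hvu : v ⊓ u = 0) : P v = 0 := by
  have h := hP.2 v hv
  simp only [inf_nsmul_eq_zero_of_inf_eq_zero hv hu hvu, Set.range_const] at h
  exact h.unique isLUB_singleton

theorem apply_eq_posPart {a : E} (hP : IsProjOnBandGen P a⁺) : P a = a⁺ := by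
  have hneg : P a⁻ = 0 := hP.apply_eq_zero_of_inf_eq_zero (posPart_nonneg a)
    (negPart_nonneg a) (inf_comm a⁺ a⁻ ▸ posPart_inf_negPart_eq_zero a)
  rw [← posPart_sub_negPart a, map_sub, hP.apply_generator (posPart_nonneg a), hneg, sub_zero,
    posPart_sub_negPart]

variable {x e : E} {l : ℝ}

theorem apply_sub_smul_apply (hP : IsProjOnBandGen P (x - l • e)⁺) :
    P x - l • P e = (x - l • e)⁺ := by
  rw [← map_smul, ← map_sub, hP.apply_eq_posPart]

theorem smul_apply_le_apply (hP : IsProjOnBandGen P (x - l • e)⁺) : l • P e ≤ P x :=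
  sub_nonneg.1 (hP.apply_sub_smul_apply ▸ posPart_nonneg _)

theorem sub_apply_le (hP : IsProjOnBandGen P (x - l • e)⁺) : x - P x ≤ l • (e - P e) := by
  have h : x - l • e ≤ P x - l • P e := hP.apply_sub_smul_apply ▸ le_posPart _
  rw [smul_sub]
  calc x - P x = (x - l • e) + (l • e - P x) := by abel
    _ ≤ (P x - l • P e) + (l • e - P x) := add_le_add_left h _
    _ = l • e - l • P e := by abel

theorem map_sub_apply_le {χ : E →ₗ[ℝ] ℝ} (hχ : Monotone χ) (hP : IsProjOnBandGen P (x - l • e)⁺)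
    (he : 0 ≤ e) (hl : 0 ≤ l) : χ (x - P x) ≤ l * χ e := by
  have hPe : 0 ≤ χ (P e) := map_zero χ ▸ hχ (hP.1.2 e he).1
  calc χ (x - P x) ≤ χ (l • (e - P e)) := hχ hP.sub_apply_le
    _ = l * χ e - l * χ (P e) := by rw [map_smul, map_sub, smul_eq_mul, mul_sub]
    _ ≤ l * χ e := by nlinarith

end IsProjOnBandGen

section UniformIntegrability

variable {e : E} {ψ : E →ₗ[ℝ] ℝ} {X : ℕ → E} {P : ℕ → ℝ → E →ₗ[ℝ] E}

theorem map_apply_le_tail_add (hψ : Monotone ψ) (he : 0 ≤ e)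
    (hP : ∀ n l, IsProjOnBandGen (P n l) (|X n| - l • e)⁺) {Q : E →ₗ[ℝ] E} (hQ : IsBandProj Q)
    {l : ℝ} (hl : 0 ≤ l) (n : ℕ) : ψ (Q |X n|) ≤ ψ (P n l |X n|) + l * ψ (Q e) := by
  have hPX : Q (P n l |X n|) ≤ P n l |X n| := (hQ.2 _ ((hP n l).1.2 _ (abs_nonneg _)).1).2
  calc ψ (Q |X n|) = ψ (Q (P n l |X n|)) + (ψ ∘ₗ Q) (|X n| - P n l |X n|) := by
        rw [LinearMap.comp_apply, ← map_add, ← map_add, add_sub_cancel]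
    _ ≤ ψ (P n l |X n|) + l * (ψ ∘ₗ Q) e :=
        add_le_add (hψ hPX) ((hP n l).map_sub_apply_le (hψ.comp hQ.monotone) he hl)
    _ = ψ (P n l |X n|) + l * ψ (Q e) := rfl

theorem bounded_of_tail_lt (hψ : Monotone ψ) (hψe : ψ e = 1) (he : 0 ≤ e)
    (hP : ∀ n l, IsProjOnBandGen (P n l) (|X n| - l • e)⁺)
    (htail : ∀ ε : ℝ, 0 < ε → ∃ l₀ : ℝ, ∀ l, l₀ ≤ l → ∀ n, ψ (P n l |X n|) < ε) :
    ∃ M : ℝ, ∀ n, ψ |X n| ≤ M := by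
  obtain ⟨l₀, hl₀⟩ := htail 1 one_pos
  refine ⟨1 + max l₀ 0, fun n => ?_⟩
  have hid : IsBandProj (LinearMap.id : E →ₗ[ℝ] E) := ⟨fun _ => rfl, fun _ hx => ⟨hx, le_rfl⟩⟩
  have h := map_apply_le_tail_add hψ he hP hid (le_max_right l₀ 0) n
  simp only [LinearMap.id_apply, hψe, mul_one] at h
  linarith [hl₀ _ (le_max_left l₀ 0) n]

theorem absCont_of_tail_lt (hψ : Monotone ψ) (he : 0 ≤ e)
    (hP : ∀ n l, IsProjOnBandGen (P n l) (|X n| - l • e)⁺)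
    (htail : ∀ ε : ℝ, 0 < ε → ∃ l₀ : ℝ, ∀ l, l₀ ≤ l → ∀ n, ψ (P n l |X n|) < ε) :
    ∀ ε : ℝ, 0 < ε → ∃ δ : ℝ, 0 < δ ∧ ∀ Q : E →ₗ[ℝ] E, IsBandProj Q → ψ (Q e) ≤ δ →
      ∀ n, ψ (Q |X n|) < ε := by
  intro ε hε
  obtain ⟨l₀, hl₀⟩ := htail (ε / 2) (half_pos hε)
  set l := max l₀ 1
  have hl : 0 < l := one_pos.trans_le (le_max_right l₀ 1)
  refine ⟨ε / (2 * l), by positivity, fun Q hQ hQe n => ?_⟩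
  calc ψ (Q |X n|) ≤ ψ (P n l |X n|) + l * ψ (Q e) := map_apply_le_tail_add hψ he hP hQ hl.le n
    _ < ε / 2 + l * (ε / (2 * l)) :=
        add_lt_add_of_lt_of_le (hl₀ l (le_max_left l₀ 1) n) (mul_le_mul_of_nonneg_left hQe hl.le)
    _ = ε := by field_simp; ring

theorem tail_lt_of_bounded_of_absCont (hψ : Monotone ψ)
    (hP : ∀ n l, IsProjOnBandGen (P n l) (|X n| - l • e)⁺)
    (hbdd : ∃ M : ℝ, ∀ n, ψ |X n| ≤ M)
    (habs : ∀ ε : ℝ, 0 < ε → ∃ δ : ℝ, 0 < δ ∧ ∀ Q : E →ₗ[ℝ] E, IsBandProj Q → ψ (Q e) ≤ δ →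
      ∀ n, ψ (Q |X n|) < ε) :
    ∀ ε : ℝ, 0 < ε → ∃ l₀ : ℝ, ∀ l, l₀ ≤ l → ∀ n, ψ (P n l |X n|) < ε := by
  intro ε hε
  obtain ⟨M, hM⟩ := hbdd
  obtain ⟨δ, hδ, hδQ⟩ := habs ε hε
  refine ⟨max (M / δ) 1, fun l hl n => hδQ _ (hP n l).1 ?_ n⟩
  have hl0 : 0 < l := one_pos.trans_le ((le_max_right _ _).trans hl)
  have hchebyshev : l * ψ (P n l e) ≤ M := calc
    l * ψ (P n l e) = ψ (l • P n l e) := by rw [map_smul, smul_eq_mul]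
    _ ≤ ψ (P n l |X n|) := hψ (hP n l).smul_apply_le_apply
    _ ≤ ψ |X n| := hψ ((hP n l).1.2 _ (abs_nonneg _)).2
    _ ≤ M := hM n
  rw [← mul_le_mul_iff_of_pos_left hl0]
  calc l * ψ (P n l e) ≤ M := hchebyshev
    _ = M / δ * δ := (div_mul_cancel₀ M hδ.ne').symm
    _ ≤ l * δ := mul_le_mul_of_nonneg_right ((le_max_left _ _).trans hl) hδ.le

theorem tail_lt_iff_bounded_and_absCont (hψ : Monotone ψ) (hψe : ψ e = 1) (he : 0 ≤ e)
    (hP : ∀ n l, IsProjOnBandGen (P n l) (|X n| - l • e)⁺) :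
    (∀ ε : ℝ, 0 < ε → ∃ l₀ : ℝ, ∀ l, l₀ ≤ l → ∀ n, ψ (P n l |X n|) < ε) ↔
      (∃ M : ℝ, ∀ n, ψ |X n| ≤ M) ∧
      ∀ ε : ℝ, 0 < ε → ∃ δ : ℝ, 0 < δ ∧ ∀ Q : E →ₗ[ℝ] E, IsBandProj Q → ψ (Q e) ≤ δ →
        ∀ n, ψ (Q |X n|) < ε :=
  ⟨fun h => ⟨bounded_of_tail_lt hψ hψe he hP h, absCont_of_tail_lt hψ he hP h⟩,
    fun h => tail_lt_of_bounded_of_absCont hψ hP h.1 h.2⟩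

end UniformIntegrability

theorem unifInt_iff_bounded_and_absCont_general
    (e : E) (he : IsWeakUnit e)
    (F : E →ₗ[ℝ] E) (hF : IsCondExp e F)
    (Φ : Set (E →ₗ[ℝ] ℝ)) (hΦ : IsSeparatingFamily e Φ)
    (X : ℕ → E) (P : ℕ → ℝ → (E →ₗ[ℝ] E))
    (hP : ∀ n l, IsProjOnBandGen (P n l) ((|X n| - l • e) ⊔ 0)) :
    UnifInt F Φ X P ↔
      ((∀ φ ∈ Φ, ∃ M : ℝ, ∀ n, φ (F |X n|) ≤ M) ∧
       (∀ φ ∈ Φ, ∀ ε : ℝ, 0 < ε → ∃ δ : ℝ, 0 < δ ∧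
         ∀ Q : E →ₗ[ℝ] E, IsBandProj Q → φ (F (Q e)) ≤ δ →
           ∀ n, φ (F (Q |X n|)) < ε)) := by
  rw [UnifInt, ← forall₂_and]
  refine forall₂_congr fun φ hφ => ?_
  have hψe : (φ ∘ₗ F) e = 1 := by rw [LinearMap.comp_apply, hF.2.2.1, (hΦ.1 φ hφ).2.1]
  exact tail_lt_iff_bounded_and_absCont (ψ := φ ∘ₗ F)
    ((hΦ.1 φ hφ).monotone.comp hF.monotone) hψe he.1.le hP

/-- Characterization of `L¹`-uniform integrability: boundedness in each seminorm `p_φ`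
together with uniform absolute continuity. -/
theorem unifInt_iff_bounded_and_absCont
    (hE : DedekindComplete E) (e : E) (he : IsWeakUnit e)
    (F : E →ₗ[ℝ] E) (hF : IsCondExp e F)
    (Φ : Set (E →ₗ[ℝ] ℝ)) (hΦ : IsSeparatingFamily e Φ)
    (X : ℕ → E) (P : ℕ → ℝ → (E →ₗ[ℝ] E))
    (hP : ∀ n l, IsProjOnBandGen (P n l) ((|X n| - l • e) ⊔ 0)) :
    UnifInt F Φ X P ↔
      ((∀ φ ∈ Φ, ∃ M : ℝ, ∀ n, φ (F |X n|) ≤ M) ∧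
       (∀ φ ∈ Φ, ∀ ε : ℝ, 0 < ε → ∃ δ : ℝ, 0 < δ ∧
         ∀ Q : E →ₗ[ℝ] E, IsBandProj Q → φ (F (Q e)) ≤ δ →
           ∀ n, φ (F (Q |X n|)) < ε)) :=
  unifInt_iff_bounded_and_absCont_general e he F hF Φ hΦ X P hP
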